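/- arXiv:math/0501333 — 3 statements merged into one kernel-verified Lean document; each statement's English description precedes it below -/
import Mathlib

section
/- Any two surjective group homomorphisms from the free group on two generators onto the quaternion group of order 8 have the same kernel: if φ, ψ : F₂ → Q₈ are surjective homomorphisms, then ker φ = ker ψ. -/
/-!
If `φ : F₂ → Q₈` is onto, the images `p, q` of the two generators do not commute (otherwise `Q₈`
would be abelian), and in `Q₈` every non-commuting pair satisfies the defining relations
`p ^ 4 = 1`, `q ^ 2 = p ^ 2`, `q⁻¹ p q = p⁻¹` of `Q₈ = ⟨i, j⟩`
(in Mathlib `i = a 1`, `j = xa 0`). So there is an endomorphism `f` of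
`Q₈` with `f i = p`, `f j = q`, and `φ = f ∘ φ₀` for the standard epimorphism `φ₀` sending the
generators to `i, j`. Since `φ` is onto so is `f`, hence `f` is an automorphism of the finite
group `Q₈`, and `ker φ = ker φ₀`.
-/

section PowZModVal

variable {G : Type*} [Group G] {m : ℕ} {p : G}

lemma pow_zmod_val_natCast (hp : p ^ m = 1) (k : ℕ) : p ^ (k : ZMod m).val = p ^ k := by
  rw [ZMod.val_natCast, ← pow_eq_pow_mod _ hp]

variable [NeZero m]

lemma pow_zmod_val_add (hp : p ^ m = 1) (i j : ZMod m) :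
    p ^ (i + j).val = p ^ i.val * p ^ j.val := by
  rw [ZMod.val_add, ← pow_eq_pow_mod _ hp, pow_add]

lemma pow_zmod_val_sub (hp : p ^ m = 1) (i j : ZMod m) :
    p ^ (i - j).val = (p ^ j.val)⁻¹ * p ^ i.val := by
  rw [eq_inv_mul_iff_mul_eq, ← pow_zmod_val_add hp, add_sub_cancel]

end PowZModVal

lemma FreeGroup.commute_of_surjective {α G : Type*} [Group G] {φ : FreeGroup α →* G}
    (hφ : Function.Surjective φ) (h : ∀ a b, Commute (φ (of a)) (φ (of b))) (x y : G) :
    Commute x y := by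
  have hclosure : Subgroup.closure (Set.range (φ ∘ of)) = ⊤ := by
    rw [Set.range_comp, ← MonoidHom.map_closure, closure_range_of, ← MonoidHom.range_eq_map,
      MonoidHom.range_eq_top.2 hφ]
  have := Subgroup.isMulCommutative_closure (k := Set.range (φ ∘ of)) <| by
    rintro _ ⟨a, rfl⟩ _ ⟨b, rfl⟩
    exact h a b
  exact setLike_mul_comm (s := Subgroup.closure _) (hclosure ▸ Subgroup.mem_top x)
    (hclosure ▸ Subgroup.mem_top y)

namespace QuaternionGroup

section Lift

variable {n : ℕ} [NeZero n] {G : Type*} [Group G] (p q : G)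
  (hp : p ^ (2 * n) = 1) (hq : q ^ 2 = p ^ n) (hqp : q⁻¹ * p * q = p⁻¹)

def lift : QuaternionGroup n →* G where
  toFun
    | a k => p ^ k.val
    | xa k => q * p ^ k.val
  map_one' := by simp only [one_def, ZMod.val_zero, pow_zero]
  map_mul' := by
    have hconj (k : ℕ) : p ^ k * q = q * (p ^ k)⁻¹ := by
      have h := conj_pow (a := q⁻¹) (b := p) (i := k)
      rw [inv_inv, hqp] at h
      rw [← inv_pow, h]
      group
    rintro (i | i) (j | j)
    · simp only [a_mul_a, pow_zmod_val_add hp]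
    · simp only [a_mul_xa, pow_zmod_val_sub hp, ← mul_assoc, hconj]
    · simp only [xa_mul_a, pow_zmod_val_add hp, mul_assoc]
    · simp only [xa_mul_xa, pow_zmod_val_sub hp, pow_zmod_val_add hp, pow_zmod_val_natCast hp]
      rw [mul_assoc q, ← mul_assoc (p ^ i.val), hconj]
      simp only [← mul_assoc, ← sq, hq, (Commute.pow_pow_self p i.val n).inv_left.eq]

lemma lift_a_one : lift p q hp hq hqp (a 1) = p := by
  show p ^ (1 : ZMod (2 * n)).val = p
  simpa using pow_zmod_val_natCast hp 1

lemma lift_xa_zero : lift p q hp hq hqp (xa 0) = q := by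
  show q * p ^ (0 : ZMod (2 * n)).val = q
  simp

end Lift

lemma relations_of_mul_ne_mul :
    ∀ p q : QuaternionGroup 2, p * q ≠ q * p → p ^ 4 = 1 ∧ q ^ 2 = p ^ 2 ∧ q⁻¹ * p * q = p⁻¹ := by
  decide

lemma ker_eq_ker_freeGroupLift_of_surjective (φ : FreeGroup (Fin 2) →* QuaternionGroup 2)
    (hφ : Function.Surjective φ) :
    φ.ker = (FreeGroup.lift ![(a 1 : QuaternionGroup 2), xa 0]).ker := by
  set p := φ (.of 0)
  set q := φ (.of 1)
  have hpq : p * q ≠ q * p := by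
    intro hpq
    have hcomm := FreeGroup.commute_of_surjective hφ <| by
      simp only [Fin.forall_fin_two]
      exact ⟨⟨.refl p, hpq⟩, ⟨hpq.symm, .refl q⟩⟩
    exact absurd (hcomm (a 1) (xa 0)).eq (by decide)
  obtain ⟨hp, hq, hqp⟩ := relations_of_mul_ne_mul p q hpq
  set f := lift p q hp hq hqp
  have hφf : φ = f.comp (FreeGroup.lift ![(a 1 : QuaternionGroup 2), xa 0]) := by
    refine FreeGroup.ext_hom _ _ fun i ↦ ?_
    fin_cases i
    · exact (lift_a_one p q hp hq hqp).symm
    · exact (lift_xa_zero p q hp hq hqp).symm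
  have hf : Function.Injective f :=
    Finite.injective_iff_surjective.2 (Function.Surjective.of_comp (hφf ▸ hφ))
  rw [hφf, MonoidHom.ker_comp_of_injective _ _ hf]

end QuaternionGroup

/-- Any two surjective group homomorphisms from the free group on two generators
onto the quaternion group of order 8 have the same kernel. -/
theorem kernel_unique_freeGroup_to_quaternion
    (φ ψ : FreeGroup (Fin 2) →* QuaternionGroup 2)
    (hφ : Function.Surjective φ) (hψ : Function.Surjective ψ) :
    φ.ker = ψ.ker := by
  rw [QuaternionGroup.ker_eq_ker_freeGroupLift_of_surjective φ hφ,
    QuaternionGroup.ker_eq_ker_freeGroupLift_of_surjective ψ hψ]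
end

section
/- The kernel of any surjective group homomorphism from the free group on two generators onto the quaternion group of order 8 is a characteristic subgroup of the free group: if φ : F₂ → Q₈ is a surjective homomorphism, then for every automorphism α of F₂ one has α(ker φ) = ker φ. -/
/-!
Two surjections `F₂ → Q₈` differ by an automorphism of `Q₈`, hence have the same kernel: the
images of the free generators form a non-commuting pair, and `Aut(Q₈)` acts transitively on
non-commuting pairs, because any non-commuting pair `(u, v)` satisfies the defining relations
`v² = u²`, `vu = u⁻¹v` of `Q₈` and generates it. Since `φ ∘ α⁻¹` is again a surjection, the kernel
is characteristic.
-/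

open Function

theorem FreeGroup.mul_comm_of_surjective {ι G : Type*} [Group G] (φ : FreeGroup ι →* G)
    (hφ : Surjective φ) (hcomm : ∀ i j, φ (of i) * φ (of j) = φ (of j) * φ (of i)) (x y : G) :
    x * y = y * x := by
  have hclosure : Subgroup.closure (Set.range (φ ∘ of)) = ⊤ := by
    rw [← lift_surjective_iff_closure_range_eq_top]
    exact (lift.apply_symm_apply φ).symm ▸ hφ
  have hle := Subgroup.closure_le_centralizer_centralizer (Set.range (φ ∘ of))
  rw [hclosure] at hle
  refine Set.centralizer_centralizer_comm_of_comm ?_ x (hle trivial) y (hle trivial)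
  rintro _ ⟨i, rfl⟩ _ ⟨j, rfl⟩
  exact hcomm i j

namespace QuaternionGroup

def ofPair (u v : QuaternionGroup 2) : QuaternionGroup 2 → QuaternionGroup 2
  | a i => u ^ i.val
  | xa i => v * u ^ i.val

theorem ofPair_mul : ∀ u v x y : QuaternionGroup 2, u * v ≠ v * u →
    ofPair u v (x * y) = ofPair u v x * ofPair u v y := by
  decide

theorem ofPair_injective : ∀ u v : QuaternionGroup 2, u * v ≠ v * u →
    Injective (ofPair u v) := by
  decide

noncomputable def mulEquivOfNotCommute (u v : QuaternionGroup 2) (h : u * v ≠ v * u) :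
    QuaternionGroup 2 ≃* QuaternionGroup 2 :=
  MulEquiv.ofBijective (MonoidHom.mk' (ofPair u v) (fun x y => ofPair_mul u v x y h))
    ⟨ofPair_injective u v h, Finite.injective_iff_surjective.mp (ofPair_injective u v h)⟩

@[simp]
theorem mulEquivOfNotCommute_a_one (u v : QuaternionGroup 2) (h : u * v ≠ v * u) :
    mulEquivOfNotCommute u v h (a 1) = u :=
  pow_one u

@[simp]
theorem mulEquivOfNotCommute_xa_zero (u v : QuaternionGroup 2) (h : u * v ≠ v * u) :
    mulEquivOfNotCommute u v h (xa 0) = v :=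
  mul_one v

theorem exists_mulEquiv_apply_eq_of_not_commute {u v c d : QuaternionGroup 2}
    (huv : u * v ≠ v * u) (hcd : c * d ≠ d * c) :
    ∃ e : QuaternionGroup 2 ≃* QuaternionGroup 2, e u = c ∧ e v = d := by
  set E := mulEquivOfNotCommute u v huv
  set E' := mulEquivOfNotCommute c d hcd
  refine ⟨E.symm.trans E', ?_, ?_⟩
  · rw [MulEquiv.trans_apply, E.symm_apply_eq.mpr (mulEquivOfNotCommute_a_one u v huv).symm]
    exact mulEquivOfNotCommute_a_one c d hcd
  · rw [MulEquiv.trans_apply, E.symm_apply_eq.mpr (mulEquivOfNotCommute_xa_zero u v huv).symm]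
    exact mulEquivOfNotCommute_xa_zero c d hcd

theorem mul_ne_mul_of_surjective (φ : FreeGroup (Fin 2) →* QuaternionGroup 2)
    (hφ : Surjective φ) :
    φ (.of 0) * φ (.of 1) ≠ φ (.of 1) * φ (.of 0) := by
  intro h
  have hcomm := FreeGroup.mul_comm_of_surjective φ hφ
    (Fin.forall_fin_two.mpr
      ⟨Fin.forall_fin_two.mpr ⟨rfl, h⟩, Fin.forall_fin_two.mpr ⟨h.symm, rfl⟩⟩) (a 1) (xa 0)
  exact absurd hcomm (by decide)

end QuaternionGroup

/-- The kernel of any surjective homomorphism from the free group on two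
generators onto the quaternion group of order 8 is a characteristic subgroup. -/
theorem kernel_characteristic_freeGroup_to_quaternion
    (φ : FreeGroup (Fin 2) →* QuaternionGroup 2)
    (hφ : Function.Surjective φ) (α : MulAut (FreeGroup (Fin 2))) :
    φ.ker.map α.toMonoidHom = φ.ker := by
  set ψ := φ.comp α.symm.toMonoidHom
  obtain ⟨e, he₀, he₁⟩ := QuaternionGroup.exists_mulEquiv_apply_eq_of_not_commute
    (QuaternionGroup.mul_ne_mul_of_surjective φ hφ)
    (QuaternionGroup.mul_ne_mul_of_surjective ψ (hφ.comp α.symm.surjective))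
  have hψ : ψ = (e : QuaternionGroup 2 →* QuaternionGroup 2).comp φ :=
    FreeGroup.ext_hom _ _ (Fin.forall_fin_two.mpr ⟨he₀.symm, he₁.symm⟩)
  calc φ.ker.map α.toMonoidHom = ψ.ker := by
        rw [Subgroup.map_equiv_eq_comap_symm', MonoidHom.comap_ker]
    _ = φ.ker := by rw [hψ, MonoidHom.ker_mulEquiv_comp]
end

section
/- Let G be a group, let a, b, c₁, c₂, c₃ ∈ G satisfy c₁ c₂ c₃ = a b a⁻¹ b⁻¹, and let φ : G → Perm(Fin 3) be a group homomorphism such that φ(a), φ(b), φ(c₁), φ(c₂), φ(c₃), φ(a·c₃) and φ(b·c₁⁻¹) are all 3-cycles. Then φ(c₁) = φ(c₂) = φ(c₃) = φ(a) and φ(b) = φ(a)⁻¹. -/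
/-!
In `Perm (Fin 3)` the alternating group has order 3, so it is generated by any 3-cycle `σ`
and the 3-cycles are exactly `σ` and `σ⁻¹`. Hence every image is `φ a` or its inverse, so
`φ a` and `φ b` commute and the relation becomes `φ c₁ * φ c₂ * φ c₃ = 1`. That `φ (a * c₃)`
and `φ (b * c₁⁻¹)` are not the identity then forces `φ c₃ = φ a`, next `φ c₁ = φ c₂ = φ a`,
and finally `φ b = (φ a)⁻¹`.
-/

namespace Equiv.Perm

variable {α : Type*} [Fintype α] [DecidableEq α]

theorem IsThreeCycle.zpowers_eq_alternatingGroup (hα : Nat.card α = 3) {σ : Perm α}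
    (hσ : σ.IsThreeCycle) : Subgroup.zpowers σ = alternatingGroup α := by
  have : Nontrivial α := Finite.one_lt_card_iff_nontrivial.mp (by omega)
  refine Subgroup.eq_of_le_of_card_ge (Subgroup.zpowers_le.mpr hσ.sign) ?_
  rw [Nat.card_zpowers, hσ.orderOf, nat_card_alternatingGroup, hα]
  decide

theorem IsThreeCycle.eq_or_eq_inv (hα : Nat.card α = 3) {σ τ : Perm α}
    (hσ : σ.IsThreeCycle) (hτ : τ.IsThreeCycle) : τ = σ ∨ τ = σ⁻¹ := by
  have hmem : τ ∈ Subgroup.zpowers σ := hσ.zpowers_eq_alternatingGroup hα ▸ hτ.sign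
  obtain ⟨k, hk, rfl⟩ := Finset.mem_image.mp (mem_zpowers_iff_mem_range_orderOf.mp hmem)
  rw [hσ.orderOf, Finset.mem_range] at hk
  interval_cases k
  · exact absurd (pow_zero σ) hτ.ne_one
  · exact .inl (pow_one σ)
  · have hσ3 : σ ^ 3 = 1 := hσ.orderOf ▸ pow_orderOf_eq_one σ
    exact .inr (eq_inv_of_mul_eq_one_left ((pow_succ σ 2).symm.trans hσ3))

end Equiv.Perm

theorem eq_of_mul_mul_eq_commutator {M : Type*} [Group M] {A B C₁ C₂ C₃ : M} (hA : A ≠ 1)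
    (hB : B = A ∨ B = A⁻¹) (hC₁ : C₁ = A ∨ C₁ = A⁻¹) (hC₂ : C₂ = A ∨ C₂ = A⁻¹)
    (hC₃ : C₃ = A ∨ C₃ = A⁻¹) (hrel : C₁ * C₂ * C₃ = A * B * A⁻¹ * B⁻¹)
    (hAC₃ : A * C₃ ≠ 1) (hBC₁ : B * C₁⁻¹ ≠ 1) :
    C₁ = A ∧ C₂ = A ∧ C₃ = A ∧ B = A⁻¹ := by
  have hcomm : A * B * A⁻¹ * B⁻¹ = 1 := by
    rcases hB with rfl | rfl <;> group
  have hC₃A : C₃ = A := hC₃.resolve_right fun h => hAC₃ (by rw [h, mul_inv_cancel])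
  subst C₃
  rw [hcomm] at hrel
  have hC₁₂ : C₁ = A ∧ C₂ = A := by
    rcases hC₁ with rfl | rfl <;> rcases hC₂ with rfl | rfl
    · exact ⟨rfl, rfl⟩
    all_goals exact absurd (by simpa [mul_assoc] using hrel) hA
  obtain ⟨rfl, rfl⟩ := hC₁₂
  exact ⟨rfl, rfl, rfl, hB.resolve_left fun h => hBC₁ (by rw [h, mul_inv_cancel])⟩

/-- The monodromy computation of Lemma 4.14: if `c₁c₂c₃ = aba⁻¹b⁻¹` and the
images under `φ : G →* Perm (Fin 3)` of `a`, `b`, `c₁`, `c₂`, `c₃`, `a·c₃` and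
`b·c₁⁻¹` are all 3-cycles, then `φ(c₁) = φ(c₂) = φ(c₃) = φ(a)` and
`φ(b) = φ(a)⁻¹`. -/
theorem monodromy_degree_three_classification {G : Type*} [Group G]
    (a b c₁ c₂ c₃ : G) (hrel : c₁ * c₂ * c₃ = a * b * a⁻¹ * b⁻¹)
    (φ : G →* Equiv.Perm (Fin 3))
    (ha : (φ a).IsThreeCycle) (hb : (φ b).IsThreeCycle)
    (hc₁ : (φ c₁).IsThreeCycle) (hc₂ : (φ c₂).IsThreeCycle)
    (hc₃ : (φ c₃).IsThreeCycle)
    (hac₃ : (φ (a * c₃)).IsThreeCycle)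
    (hbc₁ : (φ (b * c₁⁻¹)).IsThreeCycle) :
    φ c₁ = φ a ∧ φ c₂ = φ a ∧ φ c₃ = φ a ∧ φ b = (φ a)⁻¹ := by
  have hcard : Nat.card (Fin 3) = 3 := Nat.card_fin 3
  have hrel' : φ c₁ * φ c₂ * φ c₃ = φ a * φ b * (φ a)⁻¹ * (φ b)⁻¹ := by
    simpa only [map_mul, map_inv] using congrArg φ hrel
  rw [map_mul] at hac₃
  rw [map_mul, map_inv] at hbc₁
  exact eq_of_mul_mul_eq_commutator ha.ne_one (ha.eq_or_eq_inv hcard hb)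
    (ha.eq_or_eq_inv hcard hc₁) (ha.eq_or_eq_inv hcard hc₂) (ha.eq_or_eq_inv hcard hc₃)
    hrel' hac₃.ne_one hbc₁.ne_one
end
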